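/- arXiv:math/0604383 — 5 statements merged into one kernel-verified Lean document; each statement's English description precedes it below -/
import Mathlib

section
/- The function f₁ : ℝ² → ℝ defined piecewise by f₁(z₁, z₂) = z₂⁵ · sin z₂ for z₂ ≤ 0, f₁(z₁, z₂) = 0 for 0 < z₂ ≤ ψ(z₁), and f₁(z₁, z₂) = (z₂ − ψ(z₁))⁵ · sin(z₂ − ψ(z₁)) for z₂ > ψ(z₁), is continuous at every point where ψ is continuous and positive, and for each fixed z₁ the map z₂ ↦ f₁(z₁, z₂) is surjective onto ℝ. -/
/-!
Continuity: `f₁` glues three continuous pieces along the curves `z₂ = 0` and `z₂ = ψ z₁`, and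
since `t ^ 5 * sin t` vanishes at `t = 0`, neighbouring pieces agree on each curve.

Surjectivity: on `z₂ ≤ 0` the map is `t ↦ t ^ 5 * sin t`, which is even. At the points
`x ≥ 1` where `sin x = ±1` it takes the values `±x ^ 5`, so its image of the half-line
`(-∞, 0]` is a connected set unbounded in both directions, hence all of `ℝ`.
-/

noncomputable def f₁ (ψ : ℝ → ℝ) (z₁ z₂ : ℝ) : ℝ :=
  if z₂ ≤ 0 then z₂ ^ 5 * Real.sin z₂
  else if z₂ ≤ ψ z₁ then 0
  else (z₂ - ψ z₁) ^ 5 * Real.sin (z₂ - ψ z₁)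

open Real Set

theorem continuous_f₁ {ψ : ℝ → ℝ} (hψ : ∀ z, 0 ≤ ψ z) (hψc : Continuous ψ) :
    Continuous fun p : ℝ × ℝ => f₁ ψ p.1 p.2 := by
  have hupper : Continuous fun p : ℝ × ℝ =>
      if p.2 ≤ ψ p.1 then 0 else (p.2 - ψ p.1) ^ 5 * sin (p.2 - ψ p.1) :=
    Continuous.if_le continuous_const (by fun_prop) continuous_snd (hψc.comp continuous_fst)
      fun p hp => by simp [hp]
  exact Continuous.if_le (by fun_prop) hupper continuous_snd continuous_const
    fun p hp => by simp [hp, hψ p.1]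

theorem Real.exists_ge_sin_eq (a C : ℝ) : ∃ x ≥ C, sin x = sin a := by
  obtain ⟨x, hx, hsin⟩ := sin_periodic.exists_mem_Ico two_pi_pos a C
  exact ⟨x, hx.1, hsin.symm⟩

theorem pow_five_mul_sin_neg (x : ℝ) : (-x) ^ 5 * sin (-x) = x ^ 5 * sin x := by
  rw [sin_neg]; ring

theorem not_bddAbove_pow_five_mul_sin_image_Iic :
    ¬BddAbove ((fun t : ℝ => t ^ 5 * sin t) '' Iic 0) := by
  rintro ⟨C, hC⟩
  obtain ⟨x, hx, hsin⟩ := exists_ge_sin_eq (π / 2) (max (C + 1) 1)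
  obtain ⟨hxC, hx1⟩ := max_le_iff.1 hx
  have hle : (-x) ^ 5 * sin (-x) ≤ C := hC (mem_image_of_mem _ (show -x ≤ 0 by linarith))
  rw [pow_five_mul_sin_neg, hsin, sin_pi_div_two, mul_one] at hle
  linarith [le_self_pow₀ hx1 (show 5 ≠ 0 by norm_num)]

theorem not_bddBelow_pow_five_mul_sin_image_Iic :
    ¬BddBelow ((fun t : ℝ => t ^ 5 * sin t) '' Iic 0) := by
  rintro ⟨C, hC⟩
  obtain ⟨x, hx, hsin⟩ := exists_ge_sin_eq (-(π / 2)) (max (1 - C) 1)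
  obtain ⟨hxC, hx1⟩ := max_le_iff.1 hx
  have hle : C ≤ (-x) ^ 5 * sin (-x) := hC (mem_image_of_mem _ (show -x ≤ 0 by linarith))
  rw [pow_five_mul_sin_neg, hsin, sin_neg, sin_pi_div_two, mul_neg_one] at hle
  linarith [le_self_pow₀ hx1 (show 5 ≠ 0 by norm_num)]

theorem pow_five_mul_sin_image_Iic :
    (fun t : ℝ => t ^ 5 * sin t) '' Iic 0 = univ :=
  (isPreconnected_Iic.image _ (by fun_prop)).eq_univ_of_unbounded
    not_bddBelow_pow_five_mul_sin_image_Iic not_bddAbove_pow_five_mul_sin_image_Iic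

theorem f₁_surjective (ψ : ℝ → ℝ) (z₁ : ℝ) : Function.Surjective (f₁ ψ z₁) := by
  intro y
  obtain ⟨t, ht, rfl⟩ : y ∈ (fun t : ℝ => t ^ 5 * sin t) '' Iic 0 := by
    simp [pow_five_mul_sin_image_Iic]
  exact ⟨t, if_pos ht⟩

theorem f₁_continuous_and_surjective (ψ : ℝ → ℝ)
    (hψpos : ∀ z₁, 0 < ψ z₁) (hψcont : Continuous ψ) :
    Continuous (fun p : ℝ × ℝ => f₁ ψ p.1 p.2) ∧
      ∀ z₁, Function.Surjective (f₁ ψ z₁) :=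
  ⟨continuous_f₁ (fun z => (hψpos z).le) hψcont, f₁_surjective ψ⟩
end

section
/- Let Ξ be the collection of subsets of ℝ × ℝⁿ of the form Σ_{Θ,ϑ,A_Θ,A_ϑ} = { (s, z) : ϑ(z) ≤ s ≤ Θ(z) } \ ({ (s,z) : s = ϑ(z), z ∈ A_ϑ } ∪ { (s,z) : s = Θ(z), z ∈ A_Θ }), where Θ, ϑ range over all L-Lipschitz continuous functions ℝⁿ → I (I a fixed compact interval) and A_Θ, A_ϑ range over all subsets of ℝⁿ. Then Ξ is closed under finite intersections: if Σ′, Σ″ ∈ Ξ then Σ′ ∩ Σ″ ∈ Ξ. -/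
/-! The intersection of two such regions is the region between the maximum of the two lower
graphs and the minimum of the two upper graphs; `min` and `max` keep values in `I` and keep the
Lipschitz constant `L`. A point of the new lower graph lies in both regions unless it sits on a
removed part of an old lower graph, and this can only happen over points where that old graph
realises the maximum; so the new removed set is the union of the old removed sets, each cut down to
where its graph is active. The upper graphs are dual. -/

def Xi (n : ℕ) (L t₀ T : ℝ) : Set (Set (ℝ × EuclideanSpace ℝ (Fin n))) :=
  { S | ∃ (Θ ϑ : EuclideanSpace ℝ (Fin n) → ℝ)
          (AΘ Aϑ : Set (EuclideanSpace ℝ (Fin n))),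
      (∀ z, Θ z ∈ Set.Icc t₀ T) ∧ (∀ z, ϑ z ∈ Set.Icc t₀ T) ∧
      (∀ y z, |Θ y - Θ z| ≤ L * ‖y - z‖) ∧ (∀ y z, |ϑ y - ϑ z| ≤ L * ‖y - z‖) ∧
      S = { p : ℝ × EuclideanSpace ℝ (Fin n) | ϑ p.2 ≤ p.1 ∧ p.1 ≤ Θ p.2 } \
          ({ p : ℝ × EuclideanSpace ℝ (Fin n) | p.1 = ϑ p.2 ∧ p.2 ∈ Aϑ } ∪
           { p : ℝ × EuclideanSpace ℝ (Fin n) | p.1 = Θ p.2 ∧ p.2 ∈ AΘ }) }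

open Set

section Band

variable {X α : Type*} [LinearOrder α]

theorem eq_max_and_iff_of_le {a b s : α} {P Q : Prop} (ha : a ≤ s) (hb : b ≤ s) :
    (s = max a b ∧ ((b ≤ a ∧ P) ∨ (a ≤ b ∧ Q))) ↔ (s = a ∧ P) ∨ (s = b ∧ Q) := by
  grind

theorem eq_min_and_iff_of_le {a b s : α} {P Q : Prop} (ha : s ≤ a) (hb : s ≤ b) :
    (s = min a b ∧ ((a ≤ b ∧ P) ∨ (b ≤ a ∧ Q))) ↔ (s = a ∧ P) ∨ (s = b ∧ Q) := by
  grind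

/-- `band ϑ Θ Aϑ AΘ` is the paper's `Σ_{Θ,ϑ,A_Θ,A_ϑ}`. -/
def band (lo hi : X → α) (Alo Ahi : Set X) : Set (α × X) :=
  {p | lo p.2 ≤ p.1 ∧ p.1 ≤ hi p.2} \
    ({p | p.1 = lo p.2 ∧ p.2 ∈ Alo} ∪ {p | p.1 = hi p.2 ∧ p.2 ∈ Ahi})

theorem mem_band {lo hi : X → α} {Alo Ahi : Set X} {s : α} {z : X} :
    (s, z) ∈ band lo hi Alo Ahi ↔
      lo z ≤ s ∧ s ≤ hi z ∧ ¬(s = lo z ∧ z ∈ Alo) ∧ ¬(s = hi z ∧ z ∈ Ahi) := by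
  simp only [band, mem_sdiff, mem_union, mem_ofPred_eq]
  tauto

theorem band_inter_band (lo₁ hi₁ lo₂ hi₂ : X → α) (Alo₁ Ahi₁ Alo₂ Ahi₂ : Set X) :
    band lo₁ hi₁ Alo₁ Ahi₁ ∩ band lo₂ hi₂ Alo₂ Ahi₂ =
      band (fun z => max (lo₁ z) (lo₂ z)) (fun z => min (hi₁ z) (hi₂ z))
        ({z | lo₂ z ≤ lo₁ z ∧ z ∈ Alo₁} ∪ {z | lo₁ z ≤ lo₂ z ∧ z ∈ Alo₂})
        ({z | hi₁ z ≤ hi₂ z ∧ z ∈ Ahi₁} ∪ {z | hi₂ z ≤ hi₁ z ∧ z ∈ Ahi₂}) := by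
  ext ⟨s, z⟩
  simp only [mem_inter_iff, mem_band, mem_union, mem_ofPred_eq, max_le_iff, le_min_iff]
  by_cases h : lo₁ z ≤ s ∧ lo₂ z ≤ s ∧ s ≤ hi₁ z ∧ s ≤ hi₂ z
  · obtain ⟨hlo₁, hlo₂, hhi₁, hhi₂⟩ := h
    rw [eq_max_and_iff_of_le hlo₁ hlo₂, eq_min_and_iff_of_le hhi₁ hhi₂]
    tauto
  · tauto

end Band

theorem Xi_inter_mem_general (n : ℕ) (L t₀ T : ℝ) :
    ∀ S1 ∈ Xi n L t₀ T, ∀ S2 ∈ Xi n L t₀ T, S1 ∩ S2 ∈ Xi n L t₀ T := by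
  rintro _ ⟨Θ₁, ϑ₁, AΘ₁, Aϑ₁, hΘ₁, hϑ₁, hΘ₁L, hϑ₁L, rfl⟩
    _ ⟨Θ₂, ϑ₂, AΘ₂, Aϑ₂, hΘ₂, hϑ₂, hΘ₂L, hϑ₂L, rfl⟩
  exact ⟨fun z => min (Θ₁ z) (Θ₂ z), fun z => max (ϑ₁ z) (ϑ₂ z), _, _,
    fun z => min_rec' _ (hΘ₁ z) (hΘ₂ z), fun z => max_rec' _ (hϑ₁ z) (hϑ₂ z),
    fun y z => (abs_min_sub_min_le_max _ _ _ _).trans (max_le (hΘ₁L y z) (hΘ₂L y z)),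
    fun y z => (abs_max_sub_max_le_max _ _ _ _).trans (max_le (hϑ₁L y z) (hϑ₂L y z)),
    band_inter_band ϑ₁ Θ₁ ϑ₂ Θ₂ Aϑ₁ AΘ₁ Aϑ₂ AΘ₂⟩

theorem Xi_inter_mem (n : ℕ) (hn : 0 < n) (L t₀ T : ℝ) (hL : 0 < L) (hI : t₀ < T) :
    ∀ S1 ∈ Xi n L t₀ T, ∀ S2 ∈ Xi n L t₀ T, S1 ∩ S2 ∈ Xi n L t₀ T :=
  Xi_inter_mem_general n L t₀ T
end

section
/- Let Ξ be the collection of sets Σ_{Θ,ϑ,A_Θ,A_ϑ} ⊂ ℝ × ℝⁿ as above (graph-bounded sets with L-Lipschitz upper and lower boundary functions and arbitrary sets of excluded boundary points). Then Ξ is a semiring of sets: (a) ∅ ∈ Ξ; (b) Ξ is closed under pairwise intersection; (c) for all Σ, Σ₁ ∈ Ξ with Σ₁ ⊂ Σ, there exist finitely many pairwise disjoint sets Σ₂, ..., Σ_{q₀} ∈ Ξ with Σ = Σ₁ ∪ Σ₂ ∪ ... ∪ Σ_{q₀}. -/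
/-! A set lies in `XiCol` exactly when it is squeezed between the open and the closed slab of two
admissible (`Icc t₀ T`-valued, `L`-Lipschitz) boundary functions: the excluded boundary points can
then be taken to be whatever the set misses on the two graphs. Admissible functions are closed under
pointwise `max` and `min`, so the intersection of two such sets is again one, and for `S₁ ⊆ S` the
difference `S \ S₁` splits along the lower graph `ϑ₁` of `S₁` into a part between `ϑ` and
`min Θ ϑ₁` and a part between `max (max ϑ ϑ₁) Θ₁` and `Θ`. -/

def XiCol (n : ℕ) (L t₀ T : ℝ) : Set (Set (ℝ × EuclideanSpace ℝ (Fin n))) :=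
  { S | ∃ (Θ ϑ : EuclideanSpace ℝ (Fin n) → ℝ)
          (AΘ Aϑ : Set (EuclideanSpace ℝ (Fin n))),
      (∀ z, Θ z ∈ Set.Icc t₀ T) ∧ (∀ z, ϑ z ∈ Set.Icc t₀ T) ∧
      (∀ y z, |Θ y - Θ z| ≤ L * ‖y - z‖) ∧ (∀ y z, |ϑ y - ϑ z| ≤ L * ‖y - z‖) ∧
      S = { p : ℝ × EuclideanSpace ℝ (Fin n) | ϑ p.2 ≤ p.1 ∧ p.1 ≤ Θ p.2 } \
          ({ p : ℝ × EuclideanSpace ℝ (Fin n) | p.1 = ϑ p.2 ∧ p.2 ∈ Aϑ } ∪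
           { p : ℝ × EuclideanSpace ℝ (Fin n) | p.1 = Θ p.2 ∧ p.2 ∈ AΘ }) }

open Set Sublattice

theorem exists_fin_partition_sdiff {α : Type*} {C : Set (Set α)} {s s₁ : Set α} (h : s₁ ⊆ s)
    (t : Set α) (ht : s \ s₁ ∩ t ∈ C) (htc : s \ s₁ ∩ tᶜ ∈ C) :
    ∃ (q : ℕ) (f : Fin q → Set α), (∀ i, f i ∈ C) ∧ (∀ i, Disjoint s₁ (f i)) ∧
      Pairwise (Function.onFun Disjoint f) ∧ s = s₁ ∪ ⋃ i, f i := by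
  refine ⟨2, ![s \ s₁ ∩ t, s \ s₁ ∩ tᶜ], Fin.forall_fin_two.2 ⟨ht, htc⟩,
    Fin.forall_fin_two.2 ⟨disjoint_sdiff_right.mono_right inter_subset_left,
      disjoint_sdiff_right.mono_right inter_subset_left⟩, ?_, ?_⟩
  · have hdisj : Disjoint (s \ s₁ ∩ t) (s \ s₁ ∩ tᶜ) :=
      disjoint_compl_right.mono inter_subset_right inter_subset_right
    simp [Pairwise, Fin.forall_fin_two, Function.onFun, hdisj, hdisj.symm]
  · have hunion : ⋃ i, ![s \ s₁ ∩ t, s \ s₁ ∩ tᶜ] i = s \ s₁ ∩ t ∪ s \ s₁ ∩ tᶜ := by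
      ext; simp only [mem_iUnion, Fin.exists_fin_two, Matrix.cons_val_zero, Matrix.cons_val_one,
        mem_union]
    rw [hunion, inter_union_compl, union_sdiff_cancel h]

section Slabs

variable {E : Type*}

def openSlab (ϑ Θ : E → ℝ) : Set (ℝ × E) := {p | p.1 ∈ Ioo (ϑ p.2) (Θ p.2)}

def closedSlab (ϑ Θ : E → ℝ) : Set (ℝ × E) := {p | p.1 ∈ Icc (ϑ p.2) (Θ p.2)}

def IsSlabBetween (ϑ Θ : E → ℝ) (S : Set (ℝ × E)) : Prop :=
  openSlab ϑ Θ ⊆ S ∧ S ⊆ closedSlab ϑ Θ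

theorem isSlabBetween_empty (f : E → ℝ) : IsSlabBetween f f ∅ :=
  ⟨fun _ hp => (lt_irrefl _ (hp.1.trans hp.2)).elim, empty_subset _⟩

variable {ϑ Θ ϑ₁ Θ₁ ϑ₂ Θ₂ : E → ℝ} {S S₁ S₂ : Set (ℝ × E)}

theorem openSlab_sup_inf :
    openSlab (ϑ₁ ⊔ ϑ₂) (Θ₁ ⊓ Θ₂) = openSlab ϑ₁ Θ₁ ∩ openSlab ϑ₂ Θ₂ := by
  ext p; exact Iff.of_eq (congrArg (p.1 ∈ ·) Ioo_inter_Ioo).symm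

theorem closedSlab_sup_inf :
    closedSlab (ϑ₁ ⊔ ϑ₂) (Θ₁ ⊓ Θ₂) = closedSlab ϑ₁ Θ₁ ∩ closedSlab ϑ₂ Θ₂ := by
  ext p; exact Iff.of_eq (congrArg (p.1 ∈ ·) Icc_inter_Icc).symm

theorem IsSlabBetween.inter (h₁ : IsSlabBetween ϑ₁ Θ₁ S₁) (h₂ : IsSlabBetween ϑ₂ Θ₂ S₂) :
    IsSlabBetween (ϑ₁ ⊔ ϑ₂) (Θ₁ ⊓ Θ₂) (S₁ ∩ S₂) := by
  rw [IsSlabBetween, openSlab_sup_inf, closedSlab_sup_inf]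
  exact ⟨inter_subset_inter h₁.1 h₂.1, inter_subset_inter h₁.2 h₂.2⟩

theorem IsSlabBetween.sdiff_below (h : IsSlabBetween ϑ Θ S) (h₁ : IsSlabBetween ϑ₁ Θ₁ S₁) :
    IsSlabBetween ϑ (Θ ⊓ ϑ₁) (S \ S₁ ∩ {p | p.1 ≤ ϑ₁ p.2}) := by
  constructor
  · rintro p ⟨hϑ, hΘ⟩
    simp only [Pi.inf_apply, lt_inf_iff] at hΘ
    exact ⟨⟨h.1 ⟨hϑ, hΘ.1⟩, fun hp => (h₁.2 hp).1.not_gt hΘ.2⟩, hΘ.2.le⟩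
  · rintro p ⟨⟨hp, -⟩, hle⟩
    exact ⟨(h.2 hp).1, le_inf (h.2 hp).2 hle⟩

theorem IsSlabBetween.sdiff_above (h : IsSlabBetween ϑ Θ S) (h₁ : IsSlabBetween ϑ₁ Θ₁ S₁) :
    IsSlabBetween (ϑ ⊔ ϑ₁ ⊔ Θ₁) Θ (S \ S₁ ∩ {p | p.1 ≤ ϑ₁ p.2}ᶜ) := by
  constructor
  · rintro p ⟨hϑ, hΘ⟩
    simp only [Pi.sup_apply, sup_lt_iff] at hϑ
    exact ⟨⟨h.1 ⟨hϑ.1.1, hΘ⟩, fun hp => (h₁.2 hp).2.not_gt hϑ.2⟩, hϑ.1.2.not_ge⟩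
  · rintro p ⟨⟨hp, hp₁⟩, hle : ¬p.1 ≤ ϑ₁ p.2⟩
    have hΘ₁ : Θ₁ p.2 ≤ p.1 := not_lt.1 fun hlt => hp₁ (h₁.1 ⟨not_le.1 hle, hlt⟩)
    exact ⟨sup_le (sup_le (h.2 hp).1 (not_le.1 hle).le) hΘ₁, (h.2 hp).2⟩

end Slabs

def boundaryFns (E : Type*) [SeminormedAddCommGroup E] (L t₀ T : ℝ) : Sublattice (E → ℝ) where
  carrier := {f | (∀ z, f z ∈ Icc t₀ T) ∧ ∀ y z, |f y - f z| ≤ L * ‖y - z‖}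
  supClosed' _ hf _ hg :=
    ⟨fun z => ⟨le_sup_of_le_left (hf.1 z).1, sup_le (hf.1 z).2 (hg.1 z).2⟩,
      fun y z => (abs_max_sub_max_le_max _ _ _ _).trans (max_le (hf.2 y z) (hg.2 y z))⟩
  infClosed' _ hf _ hg :=
    ⟨fun z => ⟨le_inf (hf.1 z).1 (hg.1 z).1, inf_le_of_left_le (hf.1 z).2⟩,
      fun y z => (abs_min_sub_min_le_max _ _ _ _).trans (max_le (hf.2 y z) (hg.2 y z))⟩

theorem const_mem_boundaryFns {E : Type*} [SeminormedAddCommGroup E] {L t₀ T c : ℝ}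
    (hL : 0 ≤ L) (hc : c ∈ Icc t₀ T) : (fun _ => c) ∈ boundaryFns E L t₀ T :=
  ⟨fun _ => hc, fun y z => by rw [sub_self, abs_zero]; positivity⟩

theorem mem_XiCol_iff {n : ℕ} {L t₀ T : ℝ} {S : Set (ℝ × EuclideanSpace ℝ (Fin n))} :
    S ∈ XiCol n L t₀ T ↔ ∃ ϑ ∈ boundaryFns (EuclideanSpace ℝ (Fin n)) L t₀ T,
      ∃ Θ ∈ boundaryFns (EuclideanSpace ℝ (Fin n)) L t₀ T, IsSlabBetween ϑ Θ S := by
  constructor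
  · rintro ⟨Θ, ϑ, AΘ, Aϑ, hΘI, hϑI, hΘL, hϑL, rfl⟩
    refine ⟨ϑ, ⟨hϑI, hϑL⟩, Θ, ⟨hΘI, hΘL⟩, fun p hp => ⟨⟨hp.1.le, hp.2.le⟩, ?_⟩, sdiff_subset⟩
    rintro (⟨he, -⟩ | ⟨he, -⟩)
    exacts [hp.1.ne' he, hp.2.ne he]
  · rintro ⟨ϑ, ⟨hϑI, hϑL⟩, Θ, ⟨hΘI, hΘL⟩, hopen, hclosed⟩
    refine ⟨Θ, ϑ, {z | (Θ z, z) ∉ S}, {z | (ϑ z, z) ∉ S}, hΘI, hϑI, hΘL, hϑL, ?_⟩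
    ext ⟨s, z⟩
    refine ⟨fun hp => ⟨hclosed hp, ?_⟩, fun ⟨hs, hA⟩ => ?_⟩
    · rintro (⟨he, hz⟩ | ⟨he, hz⟩) <;> exact hz (he ▸ hp)
    · obtain ⟨hϑs, hsΘ⟩ : ϑ z ≤ s ∧ s ≤ Θ z := hs
      rcases hϑs.eq_or_lt with hϑ | hϑ
      · by_contra hp
        exact hA (Or.inl ⟨hϑ.symm, fun h => hp (hϑ ▸ h)⟩)
      rcases hsΘ.eq_or_lt with hΘ | hΘ
      · by_contra hp
        exact hA (Or.inr ⟨hΘ, fun h => hp (hΘ ▸ h)⟩)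
      exact hopen ⟨hϑ, hΘ⟩

theorem XiCol_isSemiring_general (n : ℕ) (L t₀ T : ℝ) (hL : 0 < L) (hI : t₀ < T) :
    (∅ ∈ XiCol n L t₀ T) ∧
    (∀ S1 ∈ XiCol n L t₀ T, ∀ S2 ∈ XiCol n L t₀ T, S1 ∩ S2 ∈ XiCol n L t₀ T) ∧
    (∀ S ∈ XiCol n L t₀ T, ∀ S1 ∈ XiCol n L t₀ T, S1 ⊆ S →
      ∃ (q : ℕ) (f : Fin q → Set (ℝ × EuclideanSpace ℝ (Fin n))),
        (∀ i, f i ∈ XiCol n L t₀ T) ∧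
        (∀ i, Disjoint S1 (f i)) ∧
        (Pairwise (Function.onFun Disjoint f)) ∧
        S = S1 ∪ ⋃ i, f i) := by
  refine ⟨?_, ?_, ?_⟩
  · have hc := const_mem_boundaryFns (E := EuclideanSpace ℝ (Fin n)) hL.le (left_mem_Icc.2 hI.le)
    exact mem_XiCol_iff.2 ⟨_, hc, _, hc, isSlabBetween_empty _⟩
  · intro S₁ hS₁ S₂ hS₂
    obtain ⟨ϑ₁, hϑ₁, Θ₁, hΘ₁, h₁⟩ := mem_XiCol_iff.1 hS₁
    obtain ⟨ϑ₂, hϑ₂, Θ₂, hΘ₂, h₂⟩ := mem_XiCol_iff.1 hS₂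
    exact mem_XiCol_iff.2 ⟨_, sup_mem hϑ₁ hϑ₂, _, inf_mem hΘ₁ hΘ₂, h₁.inter h₂⟩
  · intro S hS S₁ hS₁ hsub
    obtain ⟨ϑ, hϑ, Θ, hΘ, h⟩ := mem_XiCol_iff.1 hS
    obtain ⟨ϑ₁, hϑ₁, Θ₁, hΘ₁, h₁⟩ := mem_XiCol_iff.1 hS₁
    refine exists_fin_partition_sdiff hsub {p | p.1 ≤ ϑ₁ p.2} ?_ ?_
    · exact mem_XiCol_iff.2 ⟨_, hϑ, _, inf_mem hΘ hϑ₁, h.sdiff_below h₁⟩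
    · exact mem_XiCol_iff.2
        ⟨_, sup_mem (sup_mem hϑ hϑ₁) hΘ₁, _, hΘ, h.sdiff_above h₁⟩

theorem XiCol_isSemiring (n : ℕ) (hn : 0 < n) (L t₀ T : ℝ) (hL : 0 < L) (hI : t₀ < T) :
    (∅ ∈ XiCol n L t₀ T) ∧
    (∀ S1 ∈ XiCol n L t₀ T, ∀ S2 ∈ XiCol n L t₀ T, S1 ∩ S2 ∈ XiCol n L t₀ T) ∧
    (∀ S ∈ XiCol n L t₀ T, ∀ S1 ∈ XiCol n L t₀ T, S1 ⊆ S →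
      ∃ (q : ℕ) (f : Fin q → Set (ℝ × EuclideanSpace ℝ (Fin n))),
        (∀ i, f i ∈ XiCol n L t₀ T) ∧
        (∀ i, Disjoint S1 (f i)) ∧
        (Pairwise (Function.onFun Disjoint f)) ∧
        S = S1 ∪ ⋃ i, f i) :=
  XiCol_isSemiring_general n L t₀ T hL hI
end

section
/- Let A ∈ ℝ^{p×p}(t) and b ∈ ℝ^p(t) give a time-varying linear control system χ̇(t) = A(t)χ(t) + b(t)u(t) on an interval [a, b] that is completely controllable. Then for each i = 1,...,p there exists a C¹ control wᵢ : [a, b] → ℝ with wᵢ(a) = ẇᵢ(a) = wᵢ(b) = ẇᵢ(b) = 0 steering the state 0 ∈ ℝ^p at time a to the i-th standard basis vector eᵢ ∈ ℝ^p at time b. -/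
/-!
If the states reachable from `0` with C¹ controls vanishing to first order at `t₁` and `t₂` formed
a proper subspace, some `η ≠ 0` would be orthogonal to it. Let `ψ` solve the adjoint equation
`ψ' = -ψ A` with `ψ t₂ = η`. Along a trajectory starting at `0` one has `(ψ ⬝ᵥ χ)' = u (ψ ⬝ᵥ b)`,
so `η ⬝ᵥ χ t₂ = ∫ u (ψ ⬝ᵥ b)`; letting `u` run over the test functions supported in `(t₁, t₂)`
shows that the switching function `ψ ⬝ᵥ b` vanishes there. But then `ψ ⬝ᵥ χ` is constant along
every trajectory, whatever the control, so the state `η` is not reachable from `0`.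

The trajectories needed come from global existence for linear ODEs, obtained by chaining
Picard–Lindelöf steps of a length that depends only on the Lipschitz constant.
-/

open Set
open scoped NNReal

section LipschitzODE

variable {E : Type*} [NormedAddCommGroup E] [NormedSpace ℝ E]

theorem exists_forall_mem_Icc_hasDerivWithinAt_glue {v : ℝ → E → E} {f g : ℝ → E}
    {a b c : ℝ} (hab : a ≤ b) (hbc : b ≤ c)
    (hf : ∀ t ∈ Icc a b, HasDerivWithinAt f (v t (f t)) (Icc a b) t)
    (hg : ∀ t ∈ Icc b c, HasDerivWithinAt g (v t (g t)) (Icc b c) t) (hfg : f b = g b) :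
    ∃ h : ℝ → E, EqOn h f (Icc a b) ∧ EqOn h g (Icc b c) ∧
      ∀ t ∈ Icc a c, HasDerivWithinAt h (v t (h t)) (Icc a c) t := by
  set h : ℝ → E := fun t => if t ≤ b then f t else g t
  have hhf : EqOn h f (Icc a b) := fun t ht => if_pos ht.2
  have hhg : EqOn h g (Icc b c) := fun t ht => by
    rcases ht.1.eq_or_lt with rfl | hbt
    · exact (if_pos le_rfl).trans hfg
    · exact if_neg hbt.not_ge
  refine ⟨h, hhf, hhg, fun t ht => ?_⟩
  rw [← Icc_union_Icc_eq_Icc hab hbc]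
  refine HasDerivWithinAt.union ?_ ?_
  · by_cases htb : t ≤ b
    · have htm : t ∈ Icc a b := ⟨ht.1, htb⟩
      exact (hf t htm).congr_of_mem hhf htm |>.congr_deriv (by rw [hhf htm])
    · exact HasFDerivWithinAt.of_notMem_closure <| by
        rw [isClosed_Icc.closure_eq]; exact fun hm => htb hm.2
  · by_cases hbt : b ≤ t
    · have htm : t ∈ Icc b c := ⟨hbt, ht.2⟩
      exact (hg t htm).congr_of_mem hhg htm |>.congr_deriv (by rw [hhg htm])
    · exact HasFDerivWithinAt.of_notMem_closure <| by
        rw [isClosed_Icc.closure_eq]; exact fun hm => hbt hm.1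

variable [CompleteSpace E]

theorem exists_eq_forall_mem_Icc_hasDerivWithinAt_of_mul_le_half {v : ℝ → E → E} {K : ℝ≥0}
    {C s s' : ℝ} (hss' : s ≤ s') (hlip : ∀ t ∈ Icc s s', LipschitzWith K (v t))
    (hcont : ∀ x, ContinuousOn (v · x) (Icc s s')) (hC : ∀ t ∈ Icc s s', ‖v t 0‖ ≤ C)
    (hK : K * (s' - s) ≤ 1 / 2) (y : E) :
    ∃ f : ℝ → E, f s = y ∧
      ∀ t ∈ Icc s s', HasDerivWithinAt f (v t (f t)) (Icc s s') t := by
  have hC0 : 0 ≤ C := (norm_nonneg _).trans (hC s (left_mem_Icc.2 hss'))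
  -- Since `K (s' - s) ≤ 1/2`, solutions from `y` stay in the ball of radius `a` up to time `s'`.
  set a : ℝ := 2 * (s' - s) * (K * ‖y‖ + C)
  set L : ℝ := K * (‖y‖ + a) + C
  have ha : 0 ≤ a := by have := sub_nonneg.2 hss'; positivity
  have hL : 0 ≤ L := by positivity
  have hpl : IsPicardLindelof v ⟨s, left_mem_Icc.2 hss'⟩ y a.toNNReal 0 L.toNNReal K :=
    { lipschitzOnWith := fun t ht => (hlip t ht).lipschitzOnWith
      continuousOn := fun x _ => hcont x
      norm_le := fun t ht x hx => by
        rw [Real.coe_toNNReal L hL]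
        rw [Real.coe_toNNReal a ha] at hx
        calc ‖v t x‖ ≤ ‖v t x - v t 0‖ + ‖v t 0‖ := norm_le_norm_sub_add _ _
          _ ≤ K * ‖x‖ + C := by
            gcongr
            · simpa using (hlip t ht).norm_sub_le x 0
            · exact hC t ht
          _ ≤ K * (‖y‖ + a) + C := by gcongr; exact norm_le_of_mem_closedBall hx
      mul_max_le := by
        rw [Real.coe_toNNReal L hL, Real.coe_toNNReal a ha, NNReal.coe_zero, sub_zero, sub_self,
          max_eq_left (sub_nonneg.2 hss')]
        have : K * (s' - s) * a ≤ a / 2 := by nlinarith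
        nlinarith }
  exact hpl.exists_eq_forall_mem_Icc_hasDerivWithinAt₀

theorem exists_eq_forall_mem_Icc_hasDerivWithinAt_left {v : ℝ → E → E} {K : ℝ≥0}
    {α β : ℝ} (hαβ : α ≤ β) (hlip : ∀ t ∈ Icc α β, LipschitzWith K (v t))
    (hcont : ∀ x, ContinuousOn (v · x) (Icc α β)) (x₀ : E) :
    ∃ f : ℝ → E, f α = x₀ ∧
      ∀ t ∈ Icc α β, HasDerivWithinAt f (v t (f t)) (Icc α β) t := by
  obtain ⟨C, hC⟩ := isCompact_Icc.exists_bound_of_continuousOn (hcont 0)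
  set δ : ℝ := 1 / (2 * K + 1)
  have hδ : 0 < δ := by positivity
  have hKδ : (K : ℝ) * δ ≤ 1 / 2 := by
    rw [mul_one_div, div_le_div_iff₀ (by positivity) two_pos]; linarith
  have step : ∀ s s', α ≤ s → s ≤ s' → s' ≤ β → s' - s ≤ δ → ∀ y : E, ∃ f : ℝ → E,
      f s = y ∧ ∀ t ∈ Icc s s', HasDerivWithinAt f (v t (f t)) (Icc s s') t := by
    intro s s' hs hss' hs' hsh
    have hsub : Icc s s' ⊆ Icc α β := Icc_subset_Icc hs hs'
    exact exists_eq_forall_mem_Icc_hasDerivWithinAt_of_mul_le_half hss'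
      (fun t ht => hlip t (hsub ht)) (fun x => (hcont x).mono hsub) (fun t ht => hC t (hsub ht))
      (by nlinarith [K.coe_nonneg])
  have chain : ∀ n : ℕ, ∀ s ∈ Icc α β, β ≤ s + (n + 1) * δ → ∀ y : E, ∃ f : ℝ → E,
      f s = y ∧ ∀ t ∈ Icc s β, HasDerivWithinAt f (v t (f t)) (Icc s β) t := by
    intro n
    induction n with
    | zero => intro s hs hsβ; exact step s β hs.1 hs.2 le_rfl (by simp at hsβ; linarith)
    | succ n ih =>
      intro s hs hsβ y
      push_cast at hsβ
      set s' := min (s + δ) β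
      have hss' : s ≤ s' := le_min (by linarith) hs.2
      have hs'β : s' ≤ β := min_le_right _ _
      obtain ⟨f, hfs, hf⟩ := step s s' hs.1 hss' hs'β (by linarith [min_le_left (s + δ) β]) y
      obtain ⟨g, hgs', hg⟩ := ih s' ⟨hs.1.trans hss', hs'β⟩
        (by
          have : 0 ≤ (n + 1) * δ := by positivity
          rcases min_cases (s + δ) β with ⟨h1, -⟩ | ⟨h1, -⟩ <;> simp only [s', h1] <;> linarith)
        (f s')
      obtain ⟨F, hFf, -, hF⟩ :=
        exists_forall_mem_Icc_hasDerivWithinAt_glue hss' hs'β hf hg hgs'.symm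
      exact ⟨F, (hFf (left_mem_Icc.2 hss')).trans hfs, hF⟩
  obtain ⟨n, hn⟩ := exists_nat_ge ((β - α) / δ)
  have : β - α ≤ n * δ := (div_le_iff₀ hδ).1 hn
  exact chain n α (left_mem_Icc.2 hαβ) (by linarith) x₀

theorem exists_eq_forall_mem_Icc_hasDerivWithinAt_of_lipschitzWith {v : ℝ → E → E}
    {K : ℝ≥0} {α β t₀ : ℝ} (ht₀ : t₀ ∈ Icc α β) (hlip : ∀ t ∈ Icc α β, LipschitzWith K (v t))
    (hcont : ∀ x, ContinuousOn (v · x) (Icc α β)) (x₀ : E) :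
    ∃ f : ℝ → E, f t₀ = x₀ ∧
      ∀ t ∈ Icc α β, HasDerivWithinAt f (v t (f t)) (Icc α β) t := by
  have hneg : MapsTo Neg.neg (Icc α t₀) (Icc (-t₀) (-α)) :=
    fun t ht => ⟨neg_le_neg ht.2, neg_le_neg ht.1⟩
  have hneg' : MapsTo Neg.neg (Icc (-t₀) (-α)) (Icc α β) :=
    fun s hs => ⟨le_neg.1 hs.2, (neg_le.1 hs.1).trans ht₀.2⟩
  -- On `[α, t₀]`, solve the time-reversed equation forward from `-t₀`.
  obtain ⟨g, hg₀, hg⟩ := exists_eq_forall_mem_Icc_hasDerivWithinAt_left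
    (v := fun s x => -v (-s) x) (neg_le_neg ht₀.1) (fun s hs => (hlip (-s) (hneg' hs)).neg)
    (fun x => ((hcont x).comp continuousOn_neg hneg').neg) x₀
  have hback : ∀ t ∈ Icc α t₀,
      HasDerivWithinAt (fun t => g (-t)) (v t (g (-t))) (Icc α t₀) t := fun t ht => by
    simpa [Function.comp_def] using
      (hg (-t) (hneg ht)).scomp t (hasDerivAt_neg t).hasDerivWithinAt hneg
  obtain ⟨f, hf₀, hf⟩ := exists_eq_forall_mem_Icc_hasDerivWithinAt_left ht₀.2
    (fun t ht => hlip t (Icc_subset_Icc ht₀.1 le_rfl ht))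
    (fun x => (hcont x).mono (Icc_subset_Icc ht₀.1 le_rfl)) x₀
  obtain ⟨F, -, hFf, hF⟩ := exists_forall_mem_Icc_hasDerivWithinAt_glue ht₀.1 ht₀.2 hback hf
    (by simp [hg₀, hf₀])
  exact ⟨F, (hFf (left_mem_Icc.2 ht₀.2)).trans hf₀, hF⟩

theorem exists_eq_forall_mem_Icc_hasDerivAt_linear {M : ℝ → E →L[ℝ] E} {c : ℝ → E}
    (hM : Continuous M) (hc : Continuous c) {a b t₀ : ℝ} (ht₀ : t₀ ∈ Icc a b) (x₀ : E) :
    ∃ x : ℝ → E, x t₀ = x₀ ∧ ∀ t ∈ Icc a b, HasDerivAt x (M t (x t) + c t) t := by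
  obtain ⟨K, hK⟩ := (isCompact_Icc (a := a - 1) (b := b + 1)).image_of_continuousOn
    hM.nnnorm.continuousOn |>.bddAbove
  have hsub : Icc a b ⊆ Icc (a - 1) (b + 1) := Icc_subset_Icc (by linarith) (by linarith)
  obtain ⟨x, hx₀, hx⟩ := exists_eq_forall_mem_Icc_hasDerivWithinAt_of_lipschitzWith
    (v := fun t x => M t x + c t) (hsub ht₀)
    (fun t ht => LipschitzWith.of_dist_le_mul fun x y => by
      rw [dist_add_right]; exact ((M t).lipschitz.weaken (hK ⟨t, ht, rfl⟩)).dist_le_mul x y)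
    (fun x => ((hM.clm_apply continuous_const).add hc).continuousOn) x₀
  refine ⟨x, hx₀, fun t ht => (hx t (hsub ht)).hasDerivAt (Icc_mem_nhds ?_ ?_)⟩
  · linarith [ht.1]
  · linarith [ht.2]

end LipschitzODE

open MeasureTheory Matrix
open scoped ContDiff

theorem IsOpen.eqOn_zero_of_integral_contDiff_smul_eq_zero {E F : Type*} [NormedAddCommGroup E]
    [NormedSpace ℝ E] [FiniteDimensional ℝ E] [MeasurableSpace E] [BorelSpace E]
    [NormedAddCommGroup F] [NormedSpace ℝ F] [CompleteSpace F] {μ : Measure E}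
    [IsLocallyFiniteMeasure μ] [μ.IsOpenPosMeasure] {U : Set E} (hU : IsOpen U) {f : E → F}
    (hf : ContinuousOn f U)
    (h : ∀ g : E → ℝ, ContDiff ℝ ∞ g → HasCompactSupport g → tsupport g ⊆ U →
      ∫ x, g x • f x ∂μ = 0) :
    EqOn f 0 U := by
  have hae := hU.ae_eq_zero_of_integral_contDiff_smul_eq_zero
    (hf.locallyIntegrableOn hU.measurableSet) h
  exact Measure.eqOn_open_of_ae_eq ((ae_restrict_iff' hU.measurableSet).2 hae) hU hf
    continuousOn_const

theorem Submodule.exists_dotProduct_eq_zero_of_ne_top {K n : Type*} [Field K] [Fintype n]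
    {S : Submodule K (n → K)} (hS : S ≠ ⊤) :
    ∃ η : n → K, η ≠ 0 ∧ ∀ x ∈ S, η ⬝ᵥ x = 0 := by
  classical
  obtain ⟨φ, hφ, hker⟩ := S.exists_le_ker_of_lt_top hS.lt_top
  set η : n → K := fun i => φ fun j => if i = j then 1 else 0
  have hφη : ∀ x, φ x = η ⬝ᵥ x := fun x => by
    rw [LinearMap.pi_apply_eq_sum_univ φ x, dotProduct]
    exact Finset.sum_congr rfl fun i _ => by rw [smul_eq_mul, mul_comm]
  refine ⟨η, fun hη => hφ (LinearMap.ext fun x => by simp [hφη, hη]), fun x hx => ?_⟩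
  rw [← hφη]; exact hker hx

theorem HasDerivAt.dotProduct {n : Type*} [Fintype n] {f g : ℝ → n → ℝ} {f' g' : n → ℝ}
    {t : ℝ} (hf : HasDerivAt f f' t) (hg : HasDerivAt g g' t) :
    HasDerivAt (fun s => f s ⬝ᵥ g s) (f' ⬝ᵥ g t + f t ⬝ᵥ g') t := by
  unfold _root_.dotProduct
  rw [← Finset.sum_add_distrib]
  exact HasDerivAt.fun_sum fun i _ => (hasDerivAt_pi.1 hf i).mul (hasDerivAt_pi.1 hg i)

theorem exists_eq_forall_mem_Icc_hasDerivAt_mulVec_add {n : Type*} [Fintype n]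
    {A : ℝ → Matrix n n ℝ} {c : ℝ → n → ℝ} (hA : Continuous A) (hc : Continuous c)
    {a b t₀ : ℝ} (ht₀ : t₀ ∈ Icc a b) (x₀ : n → ℝ) :
    ∃ x : ℝ → n → ℝ, x t₀ = x₀ ∧ ∀ t ∈ Icc a b, HasDerivAt x (A t *ᵥ x t + c t) t := by
  classical
  exact exists_eq_forall_mem_Icc_hasDerivAt_linear
    (M := fun t => LinearMap.toContinuousLinearMap (Matrix.toLin' (A t)))
    (by
      let L : Matrix n n ℝ →ₗ[ℝ] (n → ℝ) →L[ℝ] (n → ℝ) :=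
        LinearMap.toContinuousLinearMap.toLinearMap ∘ₗ Matrix.toLin'.toLinearMap
      exact L.continuous_of_finiteDimensional.comp hA) hc ht₀ x₀

def c1VanishingToFirstOrderOn (s : Set ℝ) : Submodule ℝ (ℝ → ℝ) where
  carrier := {w | ContDiff ℝ 1 w ∧ ∀ t ∈ s, w t = 0 ∧ deriv w t = 0}
  zero_mem' := ⟨contDiff_const, fun t _ => by simp⟩
  add_mem' := by
    rintro w₁ w₂ ⟨hw₁, h₁⟩ ⟨hw₂, h₂⟩
    refine ⟨hw₁.add hw₂, fun t ht => ⟨by simp [(h₁ t ht).1, (h₂ t ht).1], ?_⟩⟩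
    rw [deriv_add (hw₁.differentiable one_ne_zero t) (hw₂.differentiable one_ne_zero t),
      (h₁ t ht).2, (h₂ t ht).2, add_zero]
  smul_mem' := by
    rintro r w ⟨hw, h⟩
    exact ⟨hw.const_smul r, fun t ht =>
      ⟨by simp [(h t ht).1], by simp [deriv_const_smul_field, (h t ht).2]⟩⟩

theorem mem_c1VanishingToFirstOrderOn_of_disjoint {s : Set ℝ} {w : ℝ → ℝ} (hw : ContDiff ℝ 1 w)
    (hs : Disjoint (tsupport w) s) : w ∈ c1VanishingToFirstOrderOn s :=
  ⟨hw, fun _t ht => have h := hs.notMem_of_mem_right ht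
    ⟨image_eq_zero_of_notMem_tsupport h, deriv_of_notMem_tsupport h⟩⟩

section LinearControl

variable {n : Type*} [Fintype n] (A : ℝ → Matrix n n ℝ) (b : ℝ → n → ℝ) (t₁ t₂ : ℝ)

def IsTrajectory (u : ℝ → ℝ) (χ : ℝ → n → ℝ) : Prop :=
  ∀ t ∈ Icc t₁ t₂, HasDerivAt χ (A t *ᵥ χ t + u t • b t) t

variable {A b t₁ t₂}

theorem IsTrajectory.zero : IsTrajectory A b t₁ t₂ 0 0 := fun _ _ => by simp

theorem IsTrajectory.add {u₁ u₂ : ℝ → ℝ} {χ₁ χ₂ : ℝ → n → ℝ}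
    (h₁ : IsTrajectory A b t₁ t₂ u₁ χ₁) (h₂ : IsTrajectory A b t₁ t₂ u₂ χ₂) :
    IsTrajectory A b t₁ t₂ (u₁ + u₂) (χ₁ + χ₂) :=
  fun t ht => ((h₁ t ht).add (h₂ t ht)).congr_deriv <| by
    simp only [Pi.add_apply, mulVec_add, add_smul]; abel

theorem IsTrajectory.smul {u : ℝ → ℝ} {χ : ℝ → n → ℝ} (h : IsTrajectory A b t₁ t₂ u χ)
    (r : ℝ) : IsTrajectory A b t₁ t₂ (r • u) (r • χ) :=
  fun t ht => ((h t ht).const_smul r).congr_deriv <| by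
    simp only [Pi.smul_apply, mulVec_smul, smul_add, smul_smul, smul_eq_mul]

variable (A b t₁ t₂) in
def reachableFromZero (U : Submodule ℝ (ℝ → ℝ)) : Submodule ℝ (n → ℝ) where
  carrier := {x | ∃ u ∈ U, ∃ χ, χ t₁ = 0 ∧ χ t₂ = x ∧ IsTrajectory A b t₁ t₂ u χ}
  zero_mem' := ⟨0, U.zero_mem, 0, rfl, rfl, .zero⟩
  add_mem' := by
    rintro _ _ ⟨u₁, hu₁, χ₁, h₁, rfl, hχ₁⟩ ⟨u₂, hu₂, χ₂, h₂, rfl, hχ₂⟩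
    exact ⟨u₁ + u₂, U.add_mem hu₁ hu₂, χ₁ + χ₂, by simp [h₁, h₂], rfl, hχ₁.add hχ₂⟩
  smul_mem' := by
    rintro r _ ⟨u, hu, χ, h, rfl, hχ⟩
    exact ⟨r • u, U.smul_mem r hu, r • χ, by simp [h], rfl, hχ.smul r⟩

theorem IsTrajectory.hasDerivAt_dotProduct {u : ℝ → ℝ} {χ ψ : ℝ → n → ℝ}
    (hχ : IsTrajectory A b t₁ t₂ u χ) {t : ℝ} (ht : t ∈ Icc t₁ t₂)
    (hψ : HasDerivAt ψ (-(ψ t ᵥ* A t)) t) :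
    HasDerivAt (fun s => ψ s ⬝ᵥ χ s) (u t * (ψ t ⬝ᵥ b t)) t :=
  (hψ.dotProduct (hχ t ht)).congr_deriv <| by
    rw [dotProduct_add, dotProduct_mulVec, neg_dotProduct, dotProduct_smul, smul_eq_mul]; ring

theorem IsTrajectory.dotProduct_eq_integral {u : ℝ → ℝ} {χ ψ : ℝ → n → ℝ}
    (hχ : IsTrajectory A b t₁ t₂ u χ) (hχ₁ : χ t₁ = 0) (ht : t₁ ≤ t₂)
    (hψ : ∀ t ∈ Icc t₁ t₂, HasDerivAt ψ (-(ψ t ᵥ* A t)) t)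
    (hint : IntervalIntegrable (fun t => u t * (ψ t ⬝ᵥ b t)) volume t₁ t₂) :
    ψ t₂ ⬝ᵥ χ t₂ = ∫ t in t₁..t₂, u t * (ψ t ⬝ᵥ b t) := by
  rw [intervalIntegral.integral_eq_sub_of_hasDerivAt (f := fun s => ψ s ⬝ᵥ χ s)
    (fun t ht' => ?_) hint, hχ₁, dotProduct_zero, sub_zero]
  rw [uIcc_of_le ht] at ht'
  exact hχ.hasDerivAt_dotProduct ht' (hψ t ht')

theorem IsTrajectory.dotProduct_eq_of_eqOn_zero {u : ℝ → ℝ} {χ ψ : ℝ → n → ℝ}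
    (hχ : IsTrajectory A b t₁ t₂ u χ) (ht : t₁ < t₂)
    (hψ : ∀ t ∈ Icc t₁ t₂, HasDerivAt ψ (-(ψ t ᵥ* A t)) t)
    (hg : EqOn (fun t => ψ t ⬝ᵥ b t) 0 (Ioo t₁ t₂)) :
    ψ t₂ ⬝ᵥ χ t₂ = ψ t₁ ⬝ᵥ χ t₁ := by
  have hcont : ContinuousOn (fun s => ψ s ⬝ᵥ χ s) (Icc t₁ t₂) := fun t ht' =>
    (hχ.hasDerivAt_dotProduct ht' (hψ t ht')).continuousAt.continuousWithinAt
  obtain ⟨c, hc, hslope⟩ := exists_hasDerivAt_eq_slope _ _ ht hcont fun t ht' =>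
    hχ.hasDerivAt_dotProduct (Ioo_subset_Icc_self ht') (hψ t (Ioo_subset_Icc_self ht'))
  rw [show ψ c ⬝ᵥ b c = 0 from hg hc, mul_zero, eq_comm, div_eq_zero_iff, sub_eq_zero] at hslope
  exact hslope.resolve_right (sub_ne_zero.2 ht.ne')

theorem eqOn_zero_of_forall_mem_reachableFromZero_dotProduct_eq_zero (hA : Continuous A)
    (hb : Continuous b) (ht : t₁ ≤ t₂) {ψ : ℝ → n → ℝ}
    (hψ : ∀ t ∈ Icc t₁ t₂, HasDerivAt ψ (-(ψ t ᵥ* A t)) t)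
    (hS : ∀ x ∈ reachableFromZero A b t₁ t₂ (c1VanishingToFirstOrderOn {t₁, t₂}), ψ t₂ ⬝ᵥ x = 0) :
    EqOn (fun t => ψ t ⬝ᵥ b t) 0 (Ioo t₁ t₂) := by
  have hψc : ContinuousOn ψ (Icc t₁ t₂) := fun t ht => (hψ t ht).continuousAt.continuousWithinAt
  have hg : ContinuousOn (fun t => ψ t ⬝ᵥ b t) (Icc t₁ t₂) :=
    (continuous_fst.dotProduct continuous_snd).comp_continuousOn (hψc.prodMk hb.continuousOn)
  refine isOpen_Ioo.eqOn_zero_of_integral_contDiff_smul_eq_zero (μ := volume)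
    (hg.mono Ioo_subset_Icc_self) fun w hw _ hsupp => ?_
  have hwS : w ∈ c1VanishingToFirstOrderOn {t₁, t₂} := by
    refine mem_c1VanishingToFirstOrderOn_of_disjoint (hw.of_le (by simp))
      (Set.disjoint_left.2 fun t htw => ?_)
    rintro (rfl | rfl)
    exacts [lt_irrefl _ (hsupp htw).1, lt_irrefl _ (hsupp htw).2]
  obtain ⟨χ, hχ₁, hχ⟩ := exists_eq_forall_mem_Icc_hasDerivAt_mulVec_add hA
    (hw.continuous.smul hb) (left_mem_Icc.2 ht) 0
  rw [← hS _ ⟨w, hwS, χ, hχ₁, rfl, hχ⟩, IsTrajectory.dotProduct_eq_integral hχ hχ₁ ht hψ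
    ((hw.continuous.continuousOn.mul hg).intervalIntegrable_of_Icc ht),
    intervalIntegral.integral_of_le ht,
    setIntegral_eq_integral_of_forall_compl_eq_zero fun t ht' => ?_]
  · simp only [smul_eq_mul]
  · have : t ∉ tsupport w := fun h => ht' (Ioo_subset_Ioc_self (hsupp h))
    simp [image_eq_zero_of_notMem_tsupport this]

theorem reachableFromZero_c1VanishingToFirstOrderOn_eq_top (hA : Continuous A) (hb : Continuous b)
    (ht : t₁ < t₂) (hctrl : ∀ x, ∃ u χ, χ t₁ = 0 ∧ χ t₂ = x ∧ IsTrajectory A b t₁ t₂ u χ) :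
    reachableFromZero A b t₁ t₂ (c1VanishingToFirstOrderOn {t₁, t₂}) = ⊤ := by
  by_contra hS
  obtain ⟨η, hη, hηS⟩ := Submodule.exists_dotProduct_eq_zero_of_ne_top hS
  obtain ⟨ψ, hψ₂, hψ⟩ := exists_eq_forall_mem_Icc_hasDerivAt_mulVec_add
    (A := fun t => -(A t)ᵀ) (c := 0) hA.matrix_transpose.neg continuous_const
    (right_mem_Icc.2 ht.le) η
  replace hψ : ∀ t ∈ Icc t₁ t₂, HasDerivAt ψ (-(ψ t ᵥ* A t)) t := fun t ht => by
    simpa [neg_mulVec, mulVec_transpose] using hψ t ht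
  obtain ⟨u, χ, hχ₁, hχ₂, hχ⟩ := hctrl η
  have := hχ.dotProduct_eq_of_eqOn_zero ht hψ <|
    eqOn_zero_of_forall_mem_reachableFromZero_dotProduct_eq_zero hA hb ht.le hψ (hψ₂ ▸ hηS)
  rw [hψ₂, hχ₂, hχ₁, dotProduct_zero, dotProduct_self_eq_zero] at this
  exact hη this

end LinearControl

open Set Matrix in
theorem controllable_implies_C1_controls_vanishing_endpoints_general
    (p : ℕ) (t1 t2 : ℝ) (ht : t1 < t2)
    (A : ℝ → Matrix (Fin p) (Fin p) ℝ) (bv : ℝ → Fin p → ℝ)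
    (hA : Continuous A) (hb : Continuous bv)
    (hctrl : ∀ x₀ x₁ : Fin p → ℝ, ∃ (u : ℝ → ℝ) (χ : ℝ → Fin p → ℝ),
      Measurable u ∧ (∃ C, ∀ t ∈ Icc t1 t2, |u t| ≤ C) ∧
      χ t1 = x₀ ∧ χ t2 = x₁ ∧
      ∀ t ∈ Icc t1 t2, HasDerivAt χ (A t *ᵥ χ t + u t • bv t) t) :
    ∀ i : Fin p, ∃ (w : ℝ → ℝ) (χ : ℝ → Fin p → ℝ),
      ContDiff ℝ 1 w ∧
      w t1 = 0 ∧ deriv w t1 = 0 ∧ w t2 = 0 ∧ deriv w t2 = 0 ∧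
      χ t1 = 0 ∧ χ t2 = Pi.single i 1 ∧
      ∀ t ∈ Icc t1 t2, HasDerivAt χ (A t *ᵥ χ t + w t • bv t) t := by
  have htop := reachableFromZero_c1VanishingToFirstOrderOn_eq_top hA hb ht fun x => by
    obtain ⟨u, χ, -, -, hχ₁, hχ₂, hχ⟩ := hctrl 0 x
    exact ⟨u, χ, hχ₁, hχ₂, hχ⟩
  intro i
  obtain ⟨w, ⟨hw, hw0⟩, χ, hχ₁, hχ₂, hχ⟩ := htop.ge (Submodule.mem_top (x := Pi.single i 1))
  obtain ⟨⟨hw₁, hw₁'⟩, hw₂, hw₂'⟩ : (w t1 = 0 ∧ deriv w t1 = 0) ∧ w t2 = 0 ∧ deriv w t2 = 0 := by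
    simpa using hw0
  exact ⟨w, χ, hw, hw₁, hw₁', hw₂, hw₂', hχ₁, hχ₂, hχ⟩

open Set Matrix in
theorem controllable_implies_C1_controls_vanishing_endpoints
    (p : ℕ) (hp : 0 < p) (t1 t2 : ℝ) (ht : t1 < t2)
    (A : ℝ → Matrix (Fin p) (Fin p) ℝ) (bv : ℝ → Fin p → ℝ)
    (hA : Continuous A) (hb : Continuous bv)
    (hctrl : ∀ x₀ x₁ : Fin p → ℝ, ∃ (u : ℝ → ℝ) (χ : ℝ → Fin p → ℝ),
      Measurable u ∧ (∃ C, ∀ t ∈ Icc t1 t2, |u t| ≤ C) ∧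
      χ t1 = x₀ ∧ χ t2 = x₁ ∧
      ∀ t ∈ Icc t1 t2, HasDerivAt χ (A t *ᵥ χ t + u t • bv t) t) :
    ∀ i : Fin p, ∃ (w : ℝ → ℝ) (χ : ℝ → Fin p → ℝ),
      ContDiff ℝ 1 w ∧
      w t1 = 0 ∧ deriv w t1 = 0 ∧ w t2 = 0 ∧ deriv w t2 = 0 ∧
      χ t1 = 0 ∧ χ t2 = Pi.single i 1 ∧
      ∀ t ∈ Icc t1 t2, HasDerivAt χ (A t *ᵥ χ t + w t • bv t) t :=
  controllable_implies_C1_controls_vanishing_endpoints_general p t1 t2 ht A bv hA hb hctrl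
end

section
/- Suppose β : ℝⁿ × ℝ → ℝ is continuous and for each x ∈ ℝⁿ the map u ↦ β(x, u) is surjective onto ℝ (condition (A)). Let c : I → ℝⁿ and γ : I → ℝ be measurable with c(·), γ(·) essentially bounded on a compact interval I, with c(t) a continuous curve. Then there exists a measurable essentially bounded control u : I → ℝ such that β(c(t), u(t)) = γ(t) for almost every t ∈ I. -/
/-!
By surjectivity and the intermediate value theorem, each point `x` has a neighbourhood on
which every value in `[-C, C]` is attained by `β(·, u)` with `|u| ≤ M_x`; compactness of `c(I)`
then gives one bound `M` for all `t`. The control is the least solution `u(t) ∈ [-M, M]` of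
`β(c(t), u) = γ(t)`. Its sublevel set `{u ≤ r}` is the set of `t` for which
`β(c(t), ·) - γ(t)` vanishes somewhere on the compact set `[-M, M] ∩ (-∞, r]`, and such a set
is measurable because, by continuity in `u`, the zero can be detected on a countable dense
subset.
-/

open Set MeasureTheory

lemma measurableSet_exists_mem_eq_zero {X Y : Type*} [MeasurableSpace X] [TopologicalSpace Y]
    [SecondCountableTopology Y] {F : X → Y → ℝ} (hFm : ∀ v, Measurable fun x => F x v)
    (hFc : ∀ x, Continuous (F x)) {K : Set Y} (hK : IsCompact K) :
    MeasurableSet {x | ∃ v ∈ K, F x v = 0} := by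
  obtain ⟨D, hDc, hDd⟩ := TopologicalSpace.exists_countable_dense K
  have hzeros : {x | ∃ v ∈ K, F x v = 0} =
      ⋂ m : ℕ, ⋃ d ∈ D, {x | |F x d| < 1 / (m + 1)} := by
    ext x
    simp only [mem_ofPred_eq, mem_iInter, mem_iUnion]
    constructor
    · rintro ⟨v, hvK, hv⟩ m
      have hopen : IsOpen {w : K | |F x w| < 1 / (m + 1)} :=
        isOpen_lt ((hFc x).abs.comp continuous_subtype_val) continuous_const
      obtain ⟨d, hd, hdD⟩ := hDd.exists_mem_open hopen
        ⟨⟨v, hvK⟩, show |F x v| < _ by rw [hv, abs_zero]; positivity⟩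
      exact ⟨d, hd, hdD⟩
    · intro h
      obtain ⟨d, -, -⟩ := h 0
      -- a minimiser of `|F x ·|` on `K` is a zero: it is arbitrarily small on `D ⊆ K`
      obtain ⟨v, hvK, hvmin⟩ := hK.exists_isMinOn ⟨d, d.2⟩ (hFc x).abs.continuousOn
      refine ⟨v, hvK, abs_eq_zero.mp (le_antisymm (not_lt.mp fun hpos => ?_) (abs_nonneg _))⟩
      obtain ⟨m, hm⟩ := exists_nat_one_div_lt hpos
      obtain ⟨d, -, hd⟩ := h m
      exact (hvmin d.2).not_gt (hd.trans hm)
  rw [hzeros]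
  exact .iInter fun m => .biUnion hDc fun d _ => measurableSet_lt (hFm d).abs measurable_const

lemma exists_measurable_zero_selection {X : Type*} [MeasurableSpace X] {F : X → ℝ → ℝ}
    (hFm : ∀ v, Measurable fun x => F x v) (hFc : ∀ x, Continuous (F x))
    {K : Set ℝ} (hK : IsCompact K)
    (hzero : ∀ x, ∃ v ∈ K, F x v = 0) :
    ∃ u : X → ℝ, Measurable u ∧ ∀ x, u x ∈ K ∧ F x (u x) = 0 := by
  have hZc : ∀ x, IsCompact {v ∈ K | F x v = 0} := fun x =>
    hK.inter_right (isClosed_singleton.preimage (hFc x))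
  have hmem : ∀ x, sInf {v ∈ K | F x v = 0} ∈ {v ∈ K | F x v = 0} := fun x =>
    (hZc x).sInf_mem (hzero x)
  refine ⟨fun x => sInf {v ∈ K | F x v = 0}, measurable_of_Iic fun r => ?_, hmem⟩
  have hpre : (fun x => sInf {v ∈ K | F x v = 0}) ⁻¹' Iic r =
      {x | ∃ v ∈ K ∩ Iic r, F x v = 0} := by
    ext x
    refine ⟨fun hr => ⟨_, ⟨(hmem x).1, hr⟩, (hmem x).2⟩, ?_⟩
    rintro ⟨v, ⟨hvK, hvr⟩, hv⟩
    exact (csInf_le (hZc x).bddBelow ⟨hvK, hv⟩).trans hvr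
  rw [hpre]
  exact measurableSet_exists_mem_eq_zero hFm hFc (hK.inter_right isClosed_Iic)

lemma IsCompact.exists_bounded_preimage_of_surjective {E : Type*} [TopologicalSpace E]
    {β : E → ℝ → ℝ} (hβx : ∀ v, Continuous (β · v)) (hβv : ∀ x, Continuous (β x))
    (hβsurj : ∀ x, Function.Surjective (β x)) {K : Set E} (hK : IsCompact K) (C : ℝ) :
    ∃ M, ∀ x ∈ K, ∀ z, |z| ≤ C → ∃ v ∈ Icc (-M) M, β x v = z := by
  set U : ℕ → Set E := fun M =>
    {x | ∃ p ∈ Icc (-(M : ℝ)) M, ∃ q ∈ Icc (-(M : ℝ)) M, β x p < -C ∧ C < β x q}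
  have hUo : ∀ M, IsOpen (U M) := fun M =>
    isOpen_iff_mem_nhds.mpr fun x ⟨p, hp, q, hq, hpq⟩ =>
    have hopen : IsOpen {y | β y p < -C ∧ C < β y q} :=
      (isOpen_lt (hβx p) continuous_const).inter (isOpen_lt continuous_const (hβx q))
    Filter.mem_of_superset (hopen.mem_nhds hpq) fun _ hy => ⟨p, hp, q, hq, hy⟩
  have hUmono : Monotone U := fun M N hMN x ⟨p, hp, q, hq, hpq⟩ => by
    have hMN' : (M : ℝ) ≤ N := by exact_mod_cast hMN
    have hIcc := Icc_subset_Icc (neg_le_neg hMN') hMN'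
    exact ⟨p, hIcc hp, q, hIcc hq, hpq⟩
  have hcover : K ⊆ ⋃ M, U M := fun x _ => by
    obtain ⟨p, hp⟩ := hβsurj x (-C - 1)
    obtain ⟨q, hq⟩ := hβsurj x (C + 1)
    obtain ⟨M, hM⟩ := exists_nat_ge (max |p| |q|)
    refine mem_iUnion.mpr ⟨M, p, abs_le.mp ((le_max_left _ _).trans hM), q,
      abs_le.mp ((le_max_right _ _).trans hM), by linarith, by linarith⟩
  obtain ⟨M, hM⟩ := hK.elim_directed_cover U hUo hcover hUmono.directed_le
  refine ⟨M, fun x hx z hz => ?_⟩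
  obtain ⟨p, hp, q, hq, hpC, hqC⟩ := hM hx
  have hzmem : z ∈ uIcc (β x p) (β x q) :=
    Icc_subset_uIcc ⟨by linarith [neg_abs_le z], by linarith [le_abs_self z]⟩
  obtain ⟨v, hv, hvz⟩ := intermediate_value_uIcc (hβv x).continuousOn hzmem
  exact ⟨v, uIcc_subset_Icc hp hq hv, hvz⟩

open Set MeasureTheory in
theorem filippov_selection_general
    (n : ℕ) (t₀ T : ℝ) (ht : t₀ < T)
    (β : EuclideanSpace ℝ (Fin n) → ℝ → ℝ)
    (hβc : Continuous fun p : EuclideanSpace ℝ (Fin n) × ℝ => β p.1 p.2)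
    (hβsurj : ∀ x, Function.Surjective (β x))
    (c : ℝ → EuclideanSpace ℝ (Fin n)) (hcc : ContinuousOn c (Icc t₀ T))
    (γ : ℝ → ℝ) (hγm : Measurable γ) (hγb : ∃ C, ∀ t ∈ Icc t₀ T, |γ t| ≤ C) :
    ∃ u : ℝ → ℝ, Measurable u ∧ (∃ C, ∀ t ∈ Icc t₀ T, |u t| ≤ C) ∧
      ∀ᵐ t ∂(volume.restrict (Icc t₀ T)), β (c t) (u t) = γ t := by
  obtain ⟨C, hC⟩ := hγb
  have hβx : ∀ v, Continuous (β · v) := fun v =>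
    hβc.comp (continuous_id.prodMk continuous_const)
  have hβv : ∀ x, Continuous (β x) := fun x => hβc.comp (continuous_const.prodMk continuous_id)
  -- clamping time to `Icc t₀ T` makes `c` continuous and `γ` bounded on all of `ℝ`
  set e : ℝ → ℝ := fun t => projIcc t₀ T ht.le t
  have he : Continuous e := continuous_subtype_val.comp continuous_projIcc
  have heIcc : ∀ t, e t ∈ Icc t₀ T := fun t => (projIcc t₀ T ht.le t).2
  have hce : Continuous (c ∘ e) := hcc.comp_continuous he heIcc
  obtain ⟨M, hM⟩ :=
    (isCompact_Icc.image_of_continuousOn hcc).exists_bounded_preimage_of_surjective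
      hβx hβv hβsurj C
  have hsolvable : ∀ t, ∃ v ∈ Icc (-M) M, β (c (e t)) v - γ (e t) = 0 := fun t => by
    simpa only [sub_eq_zero] using hM _ (mem_image_of_mem c (heIcc t)) _ (hC _ (heIcc t))
  obtain ⟨u, hum, hu⟩ :=
    exists_measurable_zero_selection (F := fun t v => β (c (e t)) v - γ (e t))
    (fun v => ((hβx v).comp hce).measurable.sub (hγm.comp he.measurable))
    (fun t => (hβv _).sub continuous_const) isCompact_Icc hsolvable
  refine ⟨u, hum, ⟨M, fun t _ => abs_le.mpr (hu t).1⟩,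
    ae_restrict_of_forall_mem measurableSet_Icc fun t htI => ?_⟩
  have het : e t = t := congrArg Subtype.val (projIcc_of_mem ht.le htI)
  simpa only [het, sub_eq_zero] using (hu t).2

open Set MeasureTheory in
theorem filippov_selection
    (n : ℕ) (hn : 0 < n) (t₀ T : ℝ) (ht : t₀ < T)
    (β : EuclideanSpace ℝ (Fin n) → ℝ → ℝ)
    (hβc : Continuous fun p : EuclideanSpace ℝ (Fin n) × ℝ => β p.1 p.2)
    (hβsurj : ∀ x, Function.Surjective (β x))
    (c : ℝ → EuclideanSpace ℝ (Fin n)) (hcc : ContinuousOn c (Icc t₀ T))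
    (hcb : ∃ C, ∀ t ∈ Icc t₀ T, ‖c t‖ ≤ C)
    (γ : ℝ → ℝ) (hγm : Measurable γ) (hγb : ∃ C, ∀ t ∈ Icc t₀ T, |γ t| ≤ C) :
    ∃ u : ℝ → ℝ, Measurable u ∧ (∃ C, ∀ t ∈ Icc t₀ T, |u t| ≤ C) ∧
      ∀ᵐ t ∂(volume.restrict (Icc t₀ T)), β (c t) (u t) = γ t :=
  filippov_selection_general n t₀ T ht β hβc hβsurj c hcc γ hγm hγb
end
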